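/- arXiv:2207.03158 — 6 statements merged into one kernel-verified Lean document; each statement's English description precedes it below -/
import Mathlib

section
/- In any left brace A, for every a, b ∈ A and every positive integer n, one has a^{∘n} * b = Σ_{i=1}^{n} C(n,i) e_i, where e_1 = a * b and e_{i+1} = a * e_i, and a^{∘n} denotes the n-fold product a ∘ ⋯ ∘ a. -/
/-!
The map `λ_a x = a ∘ x - a` is additive by the brace axiom, and `a ↦ λ_a` turns `∘` into
composition, so `λ_{a^{∘n}} = λ_a ^ n`. Since `a * x = λ_a x - x`, the iterates of `λ_a - 1`
on `b` are the `e_i`, and expanding `λ_a ^ n - 1 = ((λ_a - 1) + 1) ^ n - 1` binomially in the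
ring of additive endomorphisms of `A` gives the formula.
-/

/-- A left brace: an abelian group `(A,+)` together with a group operation `circ`
(whose identity is `0`) satisfying `a ∘ (b + c) + a = a ∘ b + a ∘ c`. -/
structure LeftBrace (A : Type*) [AddCommGroup A] where
  circ : A → A → A
  inv : A → A
  circ_assoc : ∀ a b c, circ (circ a b) c = circ a (circ b c)
  circ_zero : ∀ a, circ a 0 = a
  zero_circ : ∀ a, circ 0 a = a
  inv_circ : ∀ a, circ (inv a) a = 0
  compat : ∀ a b c, circ a (b + c) + a = circ a b + circ a c

namespace LeftBrace

variable {A : Type*} [AddCommGroup A]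

/-- The star operation `a * b = a ∘ b - a - b`. -/
def star (B : LeftBrace A) (a b : A) : A := B.circ a b - a - b

/-- `circPow B a n` is the product `a ∘ a ∘ ⋯ ∘ a` of `n` copies of `a`. -/
def circPow (B : LeftBrace A) (a : A) : ℕ → A
  | 0 => 0
  | n + 1 => B.circ a (B.circPow a n)

end LeftBrace

/-- The sequence e_1 = a * b, e_{i+1} = a * e_i (with the convention e 0 = b). -/
def eSeq {A : Type*} [AddCommGroup A] (B : LeftBrace A) (a b : A) : ℕ → A
  | 0 => b
  | n + 1 => B.star a (eSeq B a b n)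

open Finset in
theorem pow_sub_one_eq_sum_Icc_choose_smul {R : Type*} [Ring R] (x : R) (n : ℕ) :
    x ^ n - 1 = ∑ i ∈ Icc 1 n, n.choose i • (x - 1) ^ i := by
  have hbinom := (Commute.one_right (x - 1)).add_pow n
  rw [sub_add_cancel] at hbinom
  rw [hbinom, sum_range_succ', ← Ico_add_one_right_eq_Icc, sum_Ico_eq_sum_range]
  simp [nsmul_eq_mul, Nat.cast_comm, add_comm]

namespace LeftBrace

variable {A : Type*} [AddCommGroup A] (B : LeftBrace A)

theorem circ_add (a x y : A) : B.circ a (x + y) = B.circ a x + B.circ a y - a :=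
  eq_sub_of_add_eq (B.compat a x y)

theorem circ_sub (a x y : A) : B.circ a (x - y) = B.circ a x - B.circ a y + a := by
  have h := B.circ_add a (x - y) y
  rw [sub_add_cancel] at h
  rw [h]
  abel

def lam (a : A) : Module.End ℤ A :=
  AddMonoidHom.toIntLinearMap
    { toFun x := B.circ a x - a
      map_zero' := by simp only [B.circ_zero, sub_self]
      map_add' x y := by simp only [circ_add]; abel }

theorem lam_apply (a x : A) : B.lam a x = B.circ a x - a := rfl

theorem lam_zero : B.lam 0 = 1 := by
  ext x
  simp only [lam_apply, zero_circ, sub_zero, Module.End.one_apply]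

theorem lam_circ (a b : A) : B.lam (B.circ a b) = B.lam a * B.lam b := by
  ext x
  simp only [lam_apply, Module.End.mul_apply, circ_assoc, circ_sub]
  abel

theorem lam_circPow (a : A) (n : ℕ) : B.lam (B.circPow a n) = B.lam a ^ n := by
  induction n with
  | zero => exact B.lam_zero
  | succ n ih => rw [circPow, lam_circ, ih, pow_succ']

theorem star_eq_lam_sub_one_apply (a x : A) : B.star a x = (B.lam a - 1) x := rfl

theorem lam_sub_one_pow_apply (a b : A) (i : ℕ) : ((B.lam a - 1) ^ i) b = eSeq B a b i := by
  induction i with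
  | zero => rfl
  | succ i ih => rw [pow_succ', Module.End.mul_apply, ih, eSeq, star_eq_lam_sub_one_apply]

end LeftBrace

theorem stmt1_general {A : Type*} [AddCommGroup A] (B : LeftBrace A) (a b : A) (n : ℕ) :
    B.star (B.circPow a n) b = ∑ i ∈ Finset.Icc 1 n, n.choose i • eSeq B a b i := by
  rw [B.star_eq_lam_sub_one_apply, B.lam_circPow, pow_sub_one_eq_sum_Icc_choose_smul,
    LinearMap.coe_sum, Finset.sum_apply]
  simp only [LinearMap.smul_apply, B.lam_sub_one_pow_apply]

/-- In any left brace, a^{∘n} * b = ∑_{i=1}^n C(n,i) e_i. -/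
theorem stmt1 {A : Type*} [AddCommGroup A] (B : LeftBrace A) (a b : A) (n : ℕ) (hn : 0 < n) :
    B.star (B.circPow a n) b = ∑ i ∈ Finset.Icc 1 n, n.choose i • eSeq B a b i :=
  stmt1_general B a b n
end

section
/- In any left brace A, for every a ∈ A and every positive integer n, a^{∘n} = Σ_{i=1}^{n} C(n,i) a_i, where a_1 = a and a_{i+1} = a * a_i. -/
/-- The sequence a_1 = a, a_{i+1} = a * a_i. -/
def aSeq {A : Type*} [AddCommGroup A] (B : LeftBrace A) (a : A) : ℕ → A
  | 0 => 0
  | 1 => a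
  | n + 2 => B.star a (aSeq B a (n + 1))

section Aux

variable {A : Type*} [AddCommGroup A] (B : LeftBrace A)

lemma star_add' (a b c : A) : B.star a (b + c) = B.star a b + B.star a c := by
  have h := B.compat a b c
  unfold LeftBrace.star
  have : B.circ a (b + c) = B.circ a b + B.circ a c - a := by
    rw [← h]; abel
  rw [this]; abel

lemma star_zero' (a : A) : B.star a 0 = 0 := by
  simp [LeftBrace.star, B.circ_zero]

/-- `b ↦ a * b` as an additive hom. -/
def starHom (a : A) : A →+ A where
  toFun := B.star a
  map_zero' := star_zero' B a
  map_add' := star_add' B a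

lemma circ_eq (a b : A) : B.circ a b = a + b + B.star a b := by
  unfold LeftBrace.star; abel

lemma key (a : A) : ∀ n : ℕ, 1 ≤ n →
    B.circPow a n = ∑ i ∈ Finset.range n, (n.choose (i + 1)) • aSeq B a (i + 1) := by
  intro n
  induction n with
  | zero => omega
  | succ n ih =>
    intro _
    rcases Nat.eq_zero_or_pos n with h0 | hpos
    · subst h0
      simp [LeftBrace.circPow, B.circ_zero, aSeq]
    · have IH := ih hpos
      have hstep : B.circPow a (n + 1) = a + B.circPow a n + B.star a (B.circPow a n) := by
        show B.circ a (B.circPow a n) = _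
        rw [circ_eq]
      rw [hstep, IH]
      have hstar : B.star a (∑ i ∈ Finset.range n, (n.choose (i + 1)) • aSeq B a (i + 1))
          = ∑ i ∈ Finset.range n, (n.choose (i + 1)) • aSeq B a (i + 2) := by
        rw [show B.star a = starHom B a from rfl, map_sum]
        refine Finset.sum_congr rfl fun i _ => ?_
        rw [map_nsmul]
        rfl
      rw [hstar]
      have hpascal : ∀ i ∈ Finset.range (n + 1),
          ((n + 1).choose (i + 1)) • aSeq B a (i + 1)
            = (n.choose (i + 1)) • aSeq B a (i + 1) + (n.choose i) • aSeq B a (i + 1) := by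
        intro i _
        rw [Nat.choose_succ_succ, add_nsmul]; try exact add_comm _ _
      rw [Finset.sum_congr rfl hpascal, Finset.sum_add_distrib]
      have h1 : ∑ i ∈ Finset.range (n + 1), (n.choose (i + 1)) • aSeq B a (i + 1)
          = ∑ i ∈ Finset.range n, (n.choose (i + 1)) • aSeq B a (i + 1) := by
        rw [Finset.sum_range_succ, Nat.choose_succ_self, zero_smul, add_zero]
      have h2 : ∑ i ∈ Finset.range (n + 1), (n.choose i) • aSeq B a (i + 1)
          = a + ∑ i ∈ Finset.range n, (n.choose (i + 1)) • aSeq B a (i + 2) := by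
        rw [Finset.sum_range_succ']
        simp only [Nat.choose_zero_right, one_smul]
        rw [add_comm]
        rfl
      rw [h1, h2]
      abel

end Aux

/-- In any left brace, a^{∘n} = ∑_{i=1}^n C(n,i) a_i. -/
theorem stmt2 {A : Type*} [AddCommGroup A] (B : LeftBrace A) (a : A) (n : ℕ) (hn : 0 < n) :
    B.circPow a n = ∑ i ∈ Finset.Icc 1 n, n.choose i • aSeq B a i := by
  rw [key B a n hn]
  rw [show Finset.Icc 1 n = Finset.Ico 1 (n + 1) from rfl, Finset.sum_Ico_eq_sum_range]
  simp [add_comm 1]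
end

section
/- Let L be a powerful Lie ring whose cardinality is a power of an odd prime p. Then L^{i+1} ⊆ p^i L for all i ≥ 1, where L^{k} denotes the k-th term of the lower central series of L. In particular, if |L| = p^n then L^{n+1} = 0. -/
/-- Let L be a powerful Lie ring of cardinality p^n, p an odd prime.  Then
L^{i+1} ⊆ p^i L for all i ≥ 1 (here L^{i+1} = LieModule.lowerCentralSeries ℤ L L i),
and L^{n+1} = 0. -/
theorem stmt12 {L : Type*} [LieRing L] [Fintype L] (p n : ℕ) (hp : p.Prime)
    (hodd : Odd p) (hcard : Fintype.card L = p ^ n)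
    (hpow : ∀ x y : L, ∃ z : L, ⁅x, y⁆ = (p : ℤ) • z) :
    (∀ i : ℕ, 1 ≤ i → ∀ x ∈ LieModule.lowerCentralSeries ℤ L L i, ∃ y : L, x = ((p : ℤ) ^ i) • y) ∧
    LieModule.lowerCentralSeries ℤ L L n = ⊥ := by
  -- The Lie submodule of elements divisible by p^i
  let P : ℕ → LieSubmodule ℤ L L := fun i =>
    { carrier := {x | ∃ y : L, x = ((p : ℤ) ^ i) • y}
      add_mem' := by
        rintro a b ⟨y, rfl⟩ ⟨z, rfl⟩
        exact ⟨y + z, (smul_add _ _ _).symm⟩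
      zero_mem' := ⟨0, (smul_zero _).symm⟩
      smul_mem' := by
        rintro c a ⟨y, rfl⟩
        exact ⟨c • y, (smul_comm _ _ _)⟩
      lie_mem := by
        rintro a b ⟨y, rfl⟩
        exact ⟨⁅a, y⁆, lie_smul _ _ _⟩ }
  have hmem : ∀ i (x : L), x ∈ P i ↔ ∃ y : L, x = ((p : ℤ) ^ i) • y := fun i x => Iff.rfl
  have key : ∀ i : ℕ, 1 ≤ i → LieModule.lowerCentralSeries ℤ L L i ≤ P i := by
    intro i hi
    induction i with
    | zero => omega
    | succ k ih =>
      rw [LieModule.lowerCentralSeries_succ, LieSubmodule.lie_le_iff]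
      intro x _ m hm
      rcases Nat.eq_or_lt_of_le hi with h | h
      · -- k = 0
        obtain rfl : k = 0 := by omega
        obtain ⟨z, hz⟩ := hpow x m
        exact ⟨z, by rw [hz, pow_one]⟩
      · have hk : 1 ≤ k := by omega
        obtain ⟨y, rfl⟩ := (hmem k m).mp (ih hk hm)
        obtain ⟨z, hz⟩ := hpow x y
        refine ⟨z, ?_⟩
        rw [lie_smul, hz, smul_smul, pow_succ, mul_comm]
  have hzero : ∀ y : L, ((p : ℤ) ^ n) • y = 0 := by
    intro y
    have : ((p ^ n : ℕ) : ℤ) • y = (p ^ n : ℕ) • y := natCast_zsmul _ _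
    rw [show ((p : ℤ) ^ n) = ((p ^ n : ℕ) : ℤ) by push_cast; ring, this, ← hcard,
      card_nsmul_eq_zero]
  refine ⟨fun i hi x hx => (hmem i x).mp (key i hi hx), ?_⟩
  rcases Nat.eq_zero_or_pos n with rfl | hn
  · have : Fintype.card L = 1 := by simpa using hcard
    have : Subsingleton L := Fintype.card_le_one_iff_subsingleton.mp this.le
    exact LieSubmodule.eq_bot_iff _ |>.mpr fun m _ => Subsingleton.elim m 0
  · rw [LieSubmodule.eq_bot_iff]
    intro m hm
    obtain ⟨y, rfl⟩ := (hmem n m).mp (key n hn hm)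
    exact hzero y
end

section
/- Let G be a finite powerful p-group, x ∈ G^p and y ∈ G. Then the commutator (x,y) = x⁻¹y⁻¹xy belongs to G^{p²}. -/
/-!
Passing to `G ⧸ G^{p²}` we may assume `G^{p²} = 1`, and must show that `Z = [G^p, G]` is trivial.
If `Z` is central of exponent `p`, then for odd `p` the identity
`(uv)^p = u^p v^p [v,u]^{p(p-1)/2}` gives `(uv)^p = u^p v^p` whenever `[v,u] ∈ Z`. So `G^p` has
exponent `p`, and `y x^p y⁻¹ = ([y,x] x)^p = x^p` because `[y,x] ∈ G' ≤ G^p`; hence `G^p` is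
central and `Z = 1`.
Applied to `G ⧸ [Z,G] Z^p` this gives `Z ≤ [Z,G] Z^p`. In a finite `p`-group that forces `Z = 1`:
`Z ⧸ [Z,G]` is an abelian `p`-group consisting of `p`-th powers, hence trivial, and `Z = [Z,G]`
is impossible for `Z ≠ 1` by nilpotency.
-/

open Subgroup
open scoped commutatorElement

section Commutators

variable {G : Type*} [Group G]

theorem mul_pow_eq_of_commute_commutator {u v : G} (hu : Commute u ⁅v, u⁆)
    (hv : Commute v ⁅v, u⁆) (n : ℕ) :
    (u * v) ^ n = u ^ n * v ^ n * ⁅v, u⁆ ^ n.choose 2 := by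
  set z := ⁅v, u⁆ with hz
  have hvu : v * u = z * u * v := by rw [hz, commutatorElement_def]; group
  have hvun : ∀ n : ℕ, v * u ^ n = z ^ n * u ^ n * v := by
    intro n
    induction n with
    | zero => simp
    | succ n ih =>
      calc v * u ^ (n + 1) = z ^ n * u ^ n * (v * u) := by rw [pow_succ, ← mul_assoc, ih]; group
        _ = z ^ n * (u ^ n * z) * u * v := by rw [hvu]; group
        _ = z ^ (n + 1) * u ^ (n + 1) * v := by rw [(hu.pow_left n).eq]; group
  induction n with
  | zero => simp
  | succ n ih =>
    have hzn : Commute (u ^ (n + 1) * v ^ (n + 1)) (z ^ n) :=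
      ((hu.pow_left _).mul_left (hv.pow_left _)).pow_right n
    calc (u * v) ^ (n + 1) = u * (v * u ^ n) * v ^ n * z ^ n.choose 2 := by
          rw [pow_succ', ih]; group
      _ = (u * z ^ n) * u ^ n * v * v ^ n * z ^ n.choose 2 := by rw [hvun]; group
      _ = z ^ n * (u ^ (n + 1) * v ^ (n + 1)) * z ^ n.choose 2 := by
          rw [(hu.pow_right n).eq]; group
      _ = u ^ (n + 1) * v ^ (n + 1) * z ^ (n + 1).choose 2 := by
          rw [← hzn.eq, Nat.choose_succ_succ', Nat.choose_one_right]; group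

theorem mul_pow_eq_of_commutator_pow_eq_one {p : ℕ} (hp : Odd p) {u v : G}
    (hu : Commute u ⁅v, u⁆) (hv : Commute v ⁅v, u⁆) (hz : ⁅v, u⁆ ^ p = 1) :
    (u * v) ^ p = u ^ p * v ^ p := by
  obtain ⟨k, rfl⟩ := hp
  have hchoose : (2 * k + 1).choose 2 = (2 * k + 1) * k := by
    rw [Nat.choose_two_right, Nat.add_sub_cancel, mul_left_comm, Nat.mul_div_cancel_left _ two_pos]
  rw [mul_pow_eq_of_commute_commutator hu hv, hchoose, pow_mul, hz, one_pow, mul_one]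

end Commutators

theorem Subgroup.closure_normal_of_conj_mem {G : Type*} [Group G] {S : Set G}
    (hS : ∀ g : G, ∀ s ∈ S, g * s * g⁻¹ ∈ S) : (closure S).Normal := by
  have hconj : Group.conjugatesOfSet S ⊆ S := fun a ha => by
    obtain ⟨s, hs, hsa⟩ := Group.mem_conjugatesOfSet_iff.mp ha
    obtain ⟨c, rfl⟩ := isConj_iff.mp hsa
    exact hS c s hs
  have : closure S = normalClosure S :=
    le_antisymm closure_le_normalClosure (closure_mono hconj)
  exact this ▸ normalClosure_normal

def powerSubgroup (G : Type*) [Group G] (k : ℕ) : Subgroup G :=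
  closure (Set.range fun g : G => g ^ k)

-- The definition for odd `p`; for `p = 2` one asks `G' ≤ G^4` instead.
def IsPowerful (G : Type*) [Group G] (p : ℕ) : Prop :=
  ⁅(⊤ : Subgroup G), ⊤⁆ ≤ powerSubgroup G p

section PowerSubgroup

variable {G H : Type*} [Group G] [Group H]

instance powerSubgroup_normal (k : ℕ) : (powerSubgroup G k).Normal :=
  closure_normal_of_conj_mem <| by
    rintro g - ⟨h, rfl⟩
    exact ⟨g * h * g⁻¹, conj_pow⟩

theorem map_powerSubgroup (f : G →* H) (hf : Function.Surjective f) (k : ℕ) :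
    (powerSubgroup G k).map f = powerSubgroup H k := by
  rw [powerSubgroup, powerSubgroup, MonoidHom.map_closure, ← Set.range_comp]
  congr 1
  ext y
  constructor
  · rintro ⟨g, rfl⟩
    exact ⟨f g, (map_pow f g k).symm⟩
  · rintro ⟨h, rfl⟩
    obtain ⟨g, rfl⟩ := hf h
    exact ⟨g, map_pow f g k⟩

theorem map_commutator_powerSubgroup_top (f : G →* H) (hf : Function.Surjective f) (k : ℕ) :
    map f ⁅powerSubgroup G k, ⊤⁆ = ⁅powerSubgroup H k, ⊤⁆ := by
  rw [map_commutator, map_powerSubgroup f hf, map_top_of_surjective f hf]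

theorem IsPowerful.of_surjective {p : ℕ} (hG : IsPowerful G p) (f : G →* H)
    (hf : Function.Surjective f) : IsPowerful H p := by
  rw [IsPowerful, ← map_top_of_surjective f hf, ← map_commutator, ← map_powerSubgroup f hf]
  exact map_mono hG

end PowerSubgroup

section PGroup

variable {G : Type*} [Group G] {p : ℕ}

theorem IsPGroup.eq_one_of_surjective_pow [Finite G] (hG : IsPGroup p G)
    (hsurj : Function.Surjective fun g : G => g ^ p) (g : G) : g = 1 := by
  obtain ⟨n, hn⟩ := isPGroup_iff_exists_pow_pow_eq_one.mp hG
  obtain ⟨h, rfl⟩ := hsurj.iterate n g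
  rw [pow_iterate]
  exact hn h

theorem IsPGroup.eq_bot_of_le_closure_image_pow [Finite G] (hG : IsPGroup p G) {H : Subgroup G}
    (hH : ∀ a ∈ H, ∀ b ∈ H, Commute a b) (h : H ≤ Subgroup.closure ((· ^ p) '' (H : Set G))) :
    H = ⊥ := by
  have hsurj : Function.Surjective fun a : H => a ^ p := by
    rintro ⟨g, hg⟩
    obtain ⟨a, ha, rfl⟩ : ∃ a ∈ H, a ^ p = g := by
      replace hg := h hg
      induction hg using closure_induction with
      | mem x hx => exact hx
      | one => exact ⟨1, H.one_mem, one_pow p⟩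
      | mul x y _ _ hx hy =>
        obtain ⟨a, ha, rfl⟩ := hx
        obtain ⟨b, hb, rfl⟩ := hy
        exact ⟨a * b, mul_mem ha hb, (hH a ha b hb).mul_pow p⟩
      | inv x _ hx =>
        obtain ⟨a, ha, rfl⟩ := hx
        exact ⟨a⁻¹, inv_mem ha, inv_pow a p⟩
    exact ⟨⟨a, ha⟩, rfl⟩
  rw [eq_bot_iff]
  intro g hg
  exact congrArg Subtype.val ((hG.to_subgroup H).eq_one_of_surjective_pow hsurj ⟨g, hg⟩)

theorem Subgroup.eq_bot_of_le_commutator_top [Group.IsNilpotent G] {H : Subgroup G}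
    (h : H ≤ ⁅H, ⊤⁆) : H = ⊥ := by
  obtain ⟨n, hn⟩ := nilpotent_iff_lowerCentralSeries.mp ‹Group.IsNilpotent G›
  have hle : ∀ k, H ≤ (⊤ : Subgroup G).lowerCentralSeries k := by
    intro k
    induction k with
    | zero => exact le_top
    | succ k ih => exact h.trans (commutator_mono ih le_rfl)
  exact le_bot_iff.mp (hn ▸ hle n)

theorem IsPGroup.eq_bot_of_le_commutator_sup_closure_pow [Finite G] (hp : p.Prime)
    (hG : IsPGroup p G) {Z : Subgroup G} [Z.Normal]
    (h : Z ≤ ⁅Z, ⊤⁆ ⊔ Subgroup.closure ((· ^ p) '' (Z : Set G))) : Z = ⊥ := by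
  have : Fact p.Prime := ⟨hp⟩
  have : Group.IsNilpotent G := hG.isNilpotent
  refine eq_bot_of_le_commutator_top ?_
  set π := QuotientGroup.mk' ⁅Z, (⊤ : Subgroup G)⁆
  have hπ : ∀ g ∈ ⁅Z, ⊤⁆, π g = 1 := fun g hg => (QuotientGroup.eq_one_iff g).mpr hg
  have hZπ : Z.map π = ⊥ := by
    refine (hG.to_quotient _).eq_bot_of_le_closure_image_pow ?_ ?_
    · rintro - ⟨a, ha, rfl⟩ - ⟨b, hb, rfl⟩
      rw [← commutatorElement_eq_one_iff_commute, ← map_commutatorElement]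
      exact hπ _ (commutator_mem_commutator ha (mem_top b))
    · calc Z.map π ≤ (⁅Z, ⊤⁆ ⊔ Subgroup.closure ((· ^ p) '' (Z : Set G))).map π := map_mono h
        _ ≤ Subgroup.closure ((· ^ p) '' (Z.map π : Set (G ⧸ ⁅Z, ⊤⁆))) := by
          rw [Subgroup.map_sup, sup_le_iff, map_le_iff_le_comap, MonoidHom.map_closure, closure_le]
          refine ⟨fun g hg => by rw [mem_comap, hπ g hg]; exact one_mem _, ?_⟩
          rintro - ⟨-, ⟨z, hz, rfl⟩, rfl⟩
          exact subset_closure ⟨π z, ⟨z, hz, rfl⟩, (map_pow π z p).symm⟩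
  rwa [Subgroup.map_eq_bot_iff, QuotientGroup.ker_mk'] at hZπ

end PGroup

section Powerful

variable {G : Type*} [Group G] {p : ℕ}

theorem IsPowerful.commutator_powerSubgroup_top_eq_bot_of_le_center (hG : IsPowerful G p)
    (hp : Odd p) (hexp : ∀ g : G, g ^ p ^ 2 = 1)
    (hcen : ⁅powerSubgroup G p, ⊤⁆ ≤ center G)
    (hZp : ∀ z ∈ ⁅powerSubgroup G p, (⊤ : Subgroup G)⁆, z ^ p = 1) :
    ⁅powerSubgroup G p, (⊤ : Subgroup G)⁆ = ⊥ := by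
  have central : ∀ z ∈ ⁅powerSubgroup G p, (⊤ : Subgroup G)⁆, ∀ g : G, Commute g z :=
    fun z hz => mem_center_iff.mp (hcen hz)
  have hpow_eq_one : ∀ u ∈ powerSubgroup G p, u ^ p = 1 := by
    intro u hu
    induction hu using closure_induction with
    | mem _ hg =>
      obtain ⟨g, rfl⟩ := hg
      rw [← pow_mul, ← sq, hexp]
    | one => exact one_pow p
    | mul a b _ hb ha_one hb_one =>
      have hba := commutator_mem_commutator hb (mem_top a)
      rw [mul_pow_eq_of_commutator_pow_eq_one hp (central _ hba a) (central _ hba b) (hZp _ hba),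
        ha_one, hb_one, one_mul]
    | inv a _ ha_one => rw [inv_pow, ha_one, inv_one]
  have hpow_mem_center : ∀ x : G, x ^ p ∈ center G := by
    intro x
    rw [mem_center_iff]
    intro y
    have hd : ⁅y, x⁆ ∈ powerSubgroup G p :=
      hG (commutator_mem_commutator (mem_top y) (mem_top x))
    have hxd : ⁅x, ⁅y, x⁆⁆ ∈ ⁅powerSubgroup G p, (⊤ : Subgroup G)⁆ := by
      rw [commutator_comm]
      exact commutator_mem_commutator (mem_top x) hd
    have hconj : y * x ^ p * y⁻¹ = x ^ p :=
      calc y * x ^ p * y⁻¹ = (⁅y, x⁆ * x) ^ p := by rw [← conj_pow, commutatorElement_def]; group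
        _ = ⁅y, x⁆ ^ p * x ^ p := mul_pow_eq_of_commutator_pow_eq_one hp (central _ hxd _)
              (central _ hxd _) (hZp _ hxd)
        _ = x ^ p := by rw [hpow_eq_one _ hd, one_mul]
    exact mul_inv_eq_iff_eq_mul.mp hconj
  have hle : powerSubgroup G p ≤ center G := by
    rw [powerSubgroup, closure_le]
    rintro - ⟨x, rfl⟩
    exact hpow_mem_center x
  exact le_bot_iff.mp (commutator_center_left (⊤ : Subgroup G) ▸ commutator_mono hle le_rfl)

theorem IsPowerful.commutator_powerSubgroup_top_eq_bot [Finite G] (hG : IsPowerful G p)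
    (hp : p.Prime) (hodd : Odd p) (hpG : IsPGroup p G) (hexp : ∀ g : G, g ^ p ^ 2 = 1) :
    ⁅powerSubgroup G p, (⊤ : Subgroup G)⁆ = ⊥ := by
  set Z := ⁅powerSubgroup G p, (⊤ : Subgroup G)⁆
  set M := ⁅Z, ⊤⁆ ⊔ Subgroup.closure ((· ^ p) '' (Z : Set G))
  have : (Subgroup.closure ((· ^ p) '' (Z : Set G))).Normal :=
    closure_normal_of_conj_mem <| by
      rintro g - ⟨z, hz, rfl⟩
      exact ⟨g * z * g⁻¹, Normal.conj_mem inferInstance z hz g, conj_pow⟩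
  set π := QuotientGroup.mk' M
  have hπ : Function.Surjective π := QuotientGroup.mk'_surjective M
  have hM : ∀ g ∈ M, π g = 1 := fun g hg => (QuotientGroup.eq_one_iff g).mpr hg
  have hZπ := map_commutator_powerSubgroup_top π hπ p
  suffices Z.map π = ⊥ by
    refine hpG.eq_bot_of_le_commutator_sup_closure_pow hp ?_
    rwa [Subgroup.map_eq_bot_iff, QuotientGroup.ker_mk'] at this
  rw [hZπ]
  refine IsPowerful.commutator_powerSubgroup_top_eq_bot_of_le_center (hG.of_surjective π hπ) hodd
    ?_ ?_ ?_
  · intro q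
    obtain ⟨g, rfl⟩ := hπ q
    rw [← map_pow, hexp, map_one]
  · rw [← hZπ, map_le_iff_le_comap]
    intro z hz
    rw [mem_comap, mem_center_iff]
    intro q
    obtain ⟨g, rfl⟩ := hπ q
    rw [eq_comm, ← commutatorElement_eq_one_iff_mul_comm, ← map_commutatorElement]
    exact hM _ (mem_sup_left (commutator_mem_commutator hz (mem_top g)))
  · rw [← hZπ]
    rintro - ⟨z, hz, rfl⟩
    rw [← map_pow]
    exact hM _ (mem_sup_right (subset_closure ⟨z, hz, rfl⟩))

theorem IsPowerful.commutator_powerSubgroup_top_le [Finite G] (hG : IsPowerful G p)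
    (hp : p.Prime) (hodd : Odd p) (hpG : IsPGroup p G) :
    ⁅powerSubgroup G p, ⊤⁆ ≤ powerSubgroup G (p ^ 2) := by
  set π := QuotientGroup.mk' (powerSubgroup G (p ^ 2))
  have hπ : Function.Surjective π := QuotientGroup.mk'_surjective _
  have hexp : ∀ q : G ⧸ powerSubgroup G (p ^ 2), q ^ p ^ 2 = 1 := by
    intro q
    obtain ⟨g, rfl⟩ := hπ q
    rw [← map_pow]
    exact (QuotientGroup.eq_one_iff _).mpr (subset_closure ⟨g, rfl⟩)
  have := IsPowerful.commutator_powerSubgroup_top_eq_bot (hG.of_surjective π hπ) hp hodd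
    (hpG.to_quotient _) hexp
  rwa [← map_commutator_powerSubgroup_top π hπ, Subgroup.map_eq_bot_iff,
    QuotientGroup.ker_mk'] at this

end Powerful

/-- Let G be a finite powerful p-group (p > 2), x ∈ G^p and y ∈ G.  Then the
commutator (x,y) = x⁻¹y⁻¹xy lies in G^{p²}. -/
theorem stmt14 {G : Type*} [Group G] [Fintype G] (p : ℕ) (hp : p.Prime) (hp2 : 2 < p)
    (hpG : IsPGroup p G)
    (hpow : ⁅(⊤ : Subgroup G), (⊤ : Subgroup G)⁆ ≤
      Subgroup.closure (Set.range fun g : G => g ^ p))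
    (x y : G) (hx : x ∈ Subgroup.closure (Set.range fun g : G => g ^ p)) :
    x⁻¹ * y⁻¹ * x * y ∈ Subgroup.closure (Set.range fun g : G => g ^ (p ^ 2)) := by
  have hle := IsPowerful.commutator_powerSubgroup_top_le hpow hp (hp.odd_of_ne_two hp2.ne') hpG
  have hmem := hle (commutator_mem_commutator (inv_mem hx) (mem_top y⁻¹))
  rwa [commutatorElement_def, inv_inv, inv_inv] at hmem
end

section
/- Let L be a powerful Lie ring of cardinality p^n (p prime), and let (A,+,·) be a pre-Lie ring on the same additive group such that a·b − b·a equals the Lie bracket of L, and suppose (A,+,·) is left nilpotent. Then A is right nilpotent, i.e. there exists m such that all left-bracketed products (⋯((a_1·a_2)·a_3)⋯)·a_m vanish; consequently A is strongly nilpotent. -/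
/-- Right-bracketed product a₁·(a₂·(⋯·aₘ)) of a list of elements. -/
def rightProd {A : Type*} [AddCommGroup A] (mul : A → A → A) : List A → A
  | [] => 0
  | [a] => a
  | a :: b :: l => mul a (rightProd mul (b :: l))

/-- Left-bracketed product (⋯((a₁·a₂)·a₃)⋯)·aₘ of a list of elements. -/
def leftProd {A : Type*} [AddCommGroup A] (mul : A → A → A) : List A → A
  | [] => 0
  | a :: l => l.foldl mul a

/-- MulProd mul k x : x is a product, in any bracketing, of exactly k elements. -/
inductive MulProd {A : Type*} (mul : A → A → A) : ℕ → A → Prop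
  | base (x : A) : MulProd mul 1 x
  | mul {i j : ℕ} {x y : A} : MulProd mul i x → MulProd mul j y →
      MulProd mul (i + j) (mul x y)

namespace Stmt18Aux

variable {A : Type*} [AddCommGroup A]

lemma mulProd_one_le (mul : A → A → A) {m : ℕ} {x : A} (h : MulProd mul m x) : 1 ≤ m := by
  induction h with
  | base => exact le_refl 1
  | mul _ _ ih1 ih2 => omega

/-- `mul · y` as an additive hom. -/
def LMh (mul : A → A → A) (hadd_mul : ∀ x y z : A, mul (x + y) z = mul x z + mul y z)
    (y : A) : A →+ A :=
  AddMonoidHom.mk' (fun x => mul x y) (fun a b => hadd_mul a b y)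

/-- `mul x ·` as an additive hom. -/
def RMh (mul : A → A → A) (hmul_add : ∀ x y z : A, mul x (y + z) = mul x y + mul x z)
    (x : A) : A →+ A :=
  AddMonoidHom.mk' (fun y => mul x y) (fun a b => hmul_add x a b)

lemma zsmul_mul_left (mul : A → A → A)
    (hadd_mul : ∀ x y z : A, mul (x + y) z = mul x z + mul y z)
    (k : ℤ) (x y : A) : mul (k • x) y = k • mul x y :=
  map_zsmul (LMh mul hadd_mul y) k x

lemma zsmul_mul_right (mul : A → A → A)
    (hmul_add : ∀ x y z : A, mul x (y + z) = mul x y + mul x z)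
    (k : ℤ) (x y : A) : mul x (k • y) = k • mul x y :=
  map_zsmul (RMh mul hmul_add x) k y

lemma mul_zero' (mul : A → A → A)
    (hmul_add : ∀ x y z : A, mul x (y + z) = mul x y + mul x z)
    (x : A) : mul x 0 = 0 := by
  have := zsmul_mul_right mul hmul_add 0 x 0
  simpa using this

lemma sub_mul' (mul : A → A → A)
    (hadd_mul : ∀ x y z : A, mul (x + y) z = mul x z + mul y z)
    (a b c : A) : mul (a - b) c = mul a c - mul b c :=
  map_sub (LMh mul hadd_mul c) a b

lemma mul_sub' (mul : A → A → A)
    (hmul_add : ∀ x y z : A, mul x (y + z) = mul x y + mul x z)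
    (a b c : A) : mul a (b - c) = mul a b - mul a c :=
  map_sub (RMh mul hmul_add a) b c

/-- Congruence modulo q·A. -/
def CongQ (q : ℕ) (x y : A) : Prop := ∃ z : A, x - y = (q : ℤ) • z

lemma cong_refl (q : ℕ) (x : A) : CongQ q x x := ⟨0, by simp⟩

lemma cong_trans {q : ℕ} {x y z : A} (h1 : CongQ q x y) (h2 : CongQ q y z) :
    CongQ q x z := by
  obtain ⟨a, ha⟩ := h1; obtain ⟨b, hb⟩ := h2
  refine ⟨a + b, ?_⟩
  rw [smul_add, ← ha, ← hb]; abel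

lemma cong_mul_left (mul : A → A → A)
    (hmul_add : ∀ x y z : A, mul x (y + z) = mul x y + mul x z)
    {q : ℕ} {y y' : A} (x : A) (h : CongQ q y y') :
    CongQ q (mul x y) (mul x y') := by
  obtain ⟨a, ha⟩ := h
  exact ⟨mul x a, by rw [← zsmul_mul_right mul hmul_add, ← ha, mul_sub' mul hmul_add]⟩

lemma cong_mul_right (mul : A → A → A)
    (hadd_mul : ∀ x y z : A, mul (x + y) z = mul x z + mul y z)
    {q : ℕ} {x x' : A} (y : A) (h : CongQ q x x') :
    CongQ q (mul x y) (mul x' y) := by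
  obtain ⟨a, ha⟩ := h
  exact ⟨mul a y, by rw [← zsmul_mul_left mul hadd_mul, ← ha, sub_mul' mul hadd_mul]⟩

lemma cong_mul (mul : A → A → A)
    (hadd_mul : ∀ x y z : A, mul (x + y) z = mul x z + mul y z)
    (hmul_add : ∀ x y z : A, mul x (y + z) = mul x y + mul x z)
    {q : ℕ} {x x' y y' : A} (h1 : CongQ q x x') (h2 : CongQ q y y') :
    CongQ q (mul x y) (mul x' y') :=
  cong_trans (cong_mul_right mul hadd_mul y h1) (cong_mul_left mul hmul_add x' h2)

lemma cong_swap (mul : A → A → A)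
    (hadd_mul : ∀ x y z : A, mul (x + y) z = mul x z + mul y z)
    (hpre : ∀ x y z : A,
      mul (mul x y) z - mul x (mul y z) = mul (mul y x) z - mul y (mul x z))
    {q : ℕ} (hpowq : ∀ x y : A, ∃ z : A, mul x y - mul y x = (q : ℤ) • z)
    (x y z : A) :
    CongQ q (mul x (mul y z)) (mul y (mul x z)) := by
  have h := hpre x y z
  have h2 : mul x (mul y z) - mul y (mul x z) = mul (mul x y) z - mul (mul y x) z :=
    (sub_eq_sub_iff_sub_eq_sub.mp h).symm
  obtain ⟨w, hw⟩ := hpowq x y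
  refine ⟨mul w z, ?_⟩
  rw [h2, ← sub_mul' mul hadd_mul, hw, zsmul_mul_left mul hadd_mul]

lemma cong_assoc (mul : A → A → A)
    (hadd_mul : ∀ x y z : A, mul (x + y) z = mul x z + mul y z)
    (hmul_add : ∀ x y z : A, mul x (y + z) = mul x y + mul x z)
    (hpre : ∀ x y z : A,
      mul (mul x y) z - mul x (mul y z) = mul (mul y x) z - mul y (mul x z))
    {q : ℕ} (hpowq : ∀ x y : A, ∃ z : A, mul x y - mul y x = (q : ℤ) • z)
    (x y z : A) :
    CongQ q (mul (mul x y) z) (mul x (mul y z)) := by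
  have key : CongQ q (mul (mul y x) z) (mul y (mul x z)) := by
    refine cong_trans (hpowq (mul y x) z) ?_
    refine cong_trans (cong_swap mul hadd_mul hpre hpowq z y x) ?_
    exact cong_mul_left mul hmul_add y (hpowq z x)
  obtain ⟨w, hw⟩ := key
  exact ⟨w, by rw [hpre x y z]; exact hw⟩

lemma rightProd_append (mul : A → A → A)
    (hadd_mul : ∀ x y z : A, mul (x + y) z = mul x z + mul y z)
    (hmul_add : ∀ x y z : A, mul x (y + z) = mul x y + mul x z)
    (hpre : ∀ x y z : A,
      mul (mul x y) z - mul x (mul y z) = mul (mul y x) z - mul y (mul x z))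
    {q : ℕ} (hpowq : ∀ x y : A, ∃ z : A, mul x y - mul y x = (q : ℤ) • z)
    (l1 l2 : List A) (h1 : l1 ≠ []) (h2 : l2 ≠ []) :
    CongQ q (mul (rightProd mul l1) (rightProd mul l2)) (rightProd mul (l1 ++ l2)) := by
  induction l1 with
  | nil => exact absurd rfl h1
  | cons a t ih =>
    cases t with
    | nil =>
      cases l2 with
      | nil => exact absurd rfl h2
      | cons b s =>
        simp only [rightProd, List.cons_append, List.nil_append]
        exact cong_refl q _
    | cons c t' =>
      have hne : (c :: t') ≠ [] := by simp
      have step : rightProd mul (a :: c :: t') = mul a (rightProd mul (c :: t')) := rfl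
      have step2 : rightProd mul ((a :: c :: t') ++ l2)
          = mul a (rightProd mul ((c :: t') ++ l2)) := by
        cases l2 with
        | nil => exact absurd rfl h2
        | cons b s => rfl
      rw [step, step2]
      refine cong_trans
        (cong_assoc mul hadd_mul hmul_add hpre hpowq a (rightProd mul (c :: t'))
          (rightProd mul l2)) ?_
      exact cong_mul_left mul hmul_add a (ih hne)

lemma mulProd_cong_rightProd (mul : A → A → A)
    (hadd_mul : ∀ x y z : A, mul (x + y) z = mul x z + mul y z)
    (hmul_add : ∀ x y z : A, mul x (y + z) = mul x y + mul x z)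
    (hpre : ∀ x y z : A,
      mul (mul x y) z - mul x (mul y z) = mul (mul y x) z - mul y (mul x z))
    {q : ℕ} (hpowq : ∀ x y : A, ∃ z : A, mul x y - mul y x = (q : ℤ) • z)
    {m : ℕ} {x : A} (h : MulProd mul m x) :
    ∃ l : List A, l.length = m ∧ l ≠ [] ∧ CongQ q x (rightProd mul l) := by
  induction h with
  | base x => exact ⟨[x], rfl, by simp, cong_refl q x⟩
  | mul hx hy ihx ihy =>
    obtain ⟨l1, hl1, hne1, hc1⟩ := ihx
    obtain ⟨l2, hl2, hne2, hc2⟩ := ihy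
    refine ⟨l1 ++ l2, by simp [hl1, hl2], by simp [hne1], ?_⟩
    refine cong_trans (cong_mul mul hadd_mul hmul_add hc1 hc2) ?_
    exact rightProd_append mul hadd_mul hmul_add hpre hpowq l1 l2 hne1 hne2

lemma rightProd_long (mul : A → A → A)
    (hmul_add : ∀ x y z : A, mul x (y + z) = mul x y + mul x z)
    {m₀ : ℕ} (hm₀ : 0 < m₀)
    (hleft : ∀ l : List A, l.length = m₀ → rightProd mul l = 0) :
    ∀ l : List A, m₀ ≤ l.length → rightProd mul l = 0 := by
  intro l
  induction l with
  | nil => intro h; simp at h; omega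
  | cons a t ih =>
    intro h
    by_cases he : (a :: t).length = m₀
    · exact hleft _ he
    · have ht : m₀ ≤ t.length := by simp at h he ⊢; omega
      have htne : t ≠ [] := by
        intro hc; rw [hc] at ht; simp at ht; omega
      obtain ⟨b, s, rfl⟩ := List.exists_cons_of_ne_nil htne
      have hstep : rightProd mul (a :: b :: s) = mul a (rightProd mul (b :: s)) := rfl
      rw [hstep, ih ht, mul_zero' mul hmul_add]

/-- Length thresholds for the valuation induction. -/
def Lfun (m₀ : ℕ) : ℕ → ℕ
  | 0 => 1
  | k + 1 => 2 * Lfun m₀ k + m₀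

lemma Lfun_pos (m₀ k : ℕ) : 1 ≤ Lfun m₀ k := by
  induction k with
  | zero => exact le_refl 1
  | succ k ih => simp only [Lfun]; omega

/-- Base of the valuation induction: products of at least m₀ factors lie in p·A. -/
lemma mulProd_in_pA (mul : A → A → A) (p : ℕ)
    (hadd_mul : ∀ x y z : A, mul (x + y) z = mul x z + mul y z)
    (hmul_add : ∀ x y z : A, mul x (y + z) = mul x y + mul x z)
    (hpre : ∀ x y z : A,
      mul (mul x y) z - mul x (mul y z) = mul (mul y x) z - mul y (mul x z))
    (hpow : ∀ x y : A, ∃ z : A,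
      mul x y - mul y x = (((if p = 2 then 4 else p) : ℕ) : ℤ) • z)
    {m₀ : ℕ} (hm₀ : 0 < m₀)
    (hleft : ∀ l : List A, l.length = m₀ → rightProd mul l = 0)
    {m : ℕ} {x : A} (h : MulProd mul m x) (hm : m₀ ≤ m) :
    ∃ z : A, x = (p : ℤ) • z := by
  obtain ⟨l, hl, hne, w, hw⟩ :=
    mulProd_cong_rightProd mul hadd_mul hmul_add hpre hpow h
  have hrp : rightProd mul l = 0 :=
    rightProd_long mul hmul_add hm₀ hleft l (by rw [hl]; exact hm)
  rw [hrp, sub_zero] at hw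
  by_cases hp2 : p = 2
  · refine ⟨(2 : ℤ) • w, ?_⟩
    rw [hw, smul_smul, hp2]
    norm_num
  · refine ⟨w, ?_⟩
    rw [hw]
    simp [hp2]

/-- Valuation induction: products of at least `Lfun m₀ k` factors lie in `p^k·A`. -/
lemma mulProd_in_pkA (mul : A → A → A) (p : ℕ)
    (hadd_mul : ∀ x y z : A, mul (x + y) z = mul x z + mul y z)
    (hmul_add : ∀ x y z : A, mul x (y + z) = mul x y + mul x z)
    (hpre : ∀ x y z : A,
      mul (mul x y) z - mul x (mul y z) = mul (mul y x) z - mul y (mul x z))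
    (hpow : ∀ x y : A, ∃ z : A,
      mul x y - mul y x = (((if p = 2 then 4 else p) : ℕ) : ℤ) • z)
    {m₀ : ℕ} (hm₀ : 0 < m₀)
    (hleft : ∀ l : List A, l.length = m₀ → rightProd mul l = 0) :
    ∀ k : ℕ, ∀ m : ℕ, ∀ x : A, MulProd mul m x → Lfun m₀ k ≤ m →
    ∃ z : A, x = ((p : ℤ) ^ k) • z := by
  intro k
  induction k with
  | zero =>
    intro m x _ _
    exact ⟨x, by simp⟩
  | succ k ih =>
    have Q : ∀ m : ℕ, ∀ x : A, MulProd mul m x → Lfun m₀ k ≤ m →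
        ∃ (j : ℕ) (z : A), Lfun m₀ k ≤ j ∧ j ≤ 2 * Lfun m₀ k ∧
          MulProd mul (m + 1 - j) z ∧ x = ((p : ℤ) ^ k) • z := by
      intro m x h
      induction h with
      | base x =>
        intro hL
        obtain ⟨z, hz⟩ := ih 1 x (MulProd.base x) hL
        refine ⟨1, z, hL, ?_, MulProd.base z, hz⟩
        have := Lfun_pos m₀ k
        omega
      | @mul i j' x y hx hy ihx ihy =>
        intro hL
        by_cases hi : Lfun m₀ k ≤ i
        · obtain ⟨j, z, hj1, hj2, hz, hxe⟩ := ihx hi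
          have hj_le : j ≤ i := by have := mulProd_one_le mul hz; omega
          refine ⟨j, mul z y, hj1, hj2, ?_, ?_⟩
          · have harith : (i + 1 - j) + j' = i + j' + 1 - j := by omega
            have h3 := hz.mul hy
            rwa [harith] at h3
          · rw [hxe, zsmul_mul_left mul hadd_mul]
        · by_cases hj' : Lfun m₀ k ≤ j'
          · obtain ⟨j, z, hj1, hj2, hz, hye⟩ := ihy hj'
            have hj_le : j ≤ j' := by have := mulProd_one_le mul hz; omega
            refine ⟨j, mul x z, hj1, hj2, ?_, ?_⟩
            · have harith : i + (j' + 1 - j) = i + j' + 1 - j := by omega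
              have h3 := hx.mul hz
              rwa [harith] at h3
            · rw [hye, zsmul_mul_right mul hmul_add]
          · obtain ⟨z, hz⟩ := ih (i + j') (mul x y) (hx.mul hy) hL
            refine ⟨i + j', z, hL, by omega, ?_, hz⟩
            have harith : i + j' + 1 - (i + j') = 1 := by omega
            rw [harith]
            exact MulProd.base z
    intro m x h hL
    have hLk : Lfun m₀ k ≤ m := by
      have := Lfun_pos m₀ k
      simp only [Lfun] at hL
      omega
    obtain ⟨j, z, hj1, hj2, hz, hxe⟩ := Q m x h hLk
    have hm0 : m₀ ≤ m + 1 - j := by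
      simp only [Lfun] at hL
      omega
    obtain ⟨w, hw⟩ := mulProd_in_pA mul p hadd_mul hmul_add hpre hpow hm₀ hleft hz hm0
    refine ⟨w, ?_⟩
    rw [hxe, hw, smul_smul, ← pow_succ]

lemma mulProd_foldl (mul : A → A → A) : ∀ (rest : List A) (a : A) (i : ℕ),
    MulProd mul i a → MulProd mul (i + rest.length) (rest.foldl mul a) := by
  intro rest
  induction rest with
  | nil => intro a i h; simpa using h
  | cons b t ihp =>
    intro a i h
    have h2 : MulProd mul (i + 1) (mul a b) := h.mul (MulProd.base b)
    have h3 := ihp (mul a b) (i + 1) h2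
    have harith : i + 1 + t.length = i + (b :: t).length := by simp; omega
    rwa [harith] at h3

end Stmt18Aux

open Stmt18Aux in
/-- Let (A,+,·) be a left nilpotent pre-Lie ring of cardinality p^n whose associated
Lie ring (with bracket x·y - y·x) is powerful.  Then A is right nilpotent and
consequently strongly nilpotent. -/
theorem stmt18 {A : Type*} [AddCommGroup A] [Fintype A] (mul : A → A → A) (p n : ℕ)
    (hp : p.Prime) (hcard : Fintype.card A = p ^ n)
    (hadd_mul : ∀ x y z : A, mul (x + y) z = mul x z + mul y z)
    (hmul_add : ∀ x y z : A, mul x (y + z) = mul x y + mul x z)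
    (hpre : ∀ x y z : A,
      mul (mul x y) z - mul x (mul y z) = mul (mul y x) z - mul y (mul x z))
    (hpow : ∀ x y : A, ∃ z : A,
      mul x y - mul y x = (((if p = 2 then 4 else p) : ℕ) : ℤ) • z)
    (hleft : ∃ m : ℕ, 0 < m ∧ ∀ l : List A, l.length = m → rightProd mul l = 0) :
    (∃ m : ℕ, 0 < m ∧ ∀ l : List A, l.length = m → leftProd mul l = 0) ∧
    (∃ m : ℕ, 0 < m ∧ ∀ x : A, MulProd mul m x → x = 0) := by
  obtain ⟨m₀, hm₀, hleft'⟩ := hleft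
  set M := Lfun m₀ n with hM
  have hMpos : 0 < M := Lfun_pos m₀ n
  have key : ∀ x : A, MulProd mul M x → x = 0 := by
    intro x hx
    obtain ⟨z, hz⟩ := mulProd_in_pkA mul p hadd_mul hmul_add hpre hpow hm₀ hleft'
      n M x hx le_rfl
    rw [hz, ← Nat.cast_pow, natCast_zsmul, ← hcard]
    exact card_nsmul_eq_zero
  constructor
  · refine ⟨M, hMpos, ?_⟩
    intro l hl
    have hlne : l ≠ [] := by
      intro hc; rw [hc] at hl; simp at hl; omega
    obtain ⟨a, rest, rfl⟩ := List.exists_cons_of_ne_nil hlne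
    have hfold := mulProd_foldl mul rest a 1 (MulProd.base a)
    have hlen : 1 + rest.length = M := by simp at hl; omega
    rw [hlen] at hfold
    exact key _ hfold
  · exact ⟨M, hMpos, key⟩
end

section
/- A commutative left nilpotent pre-Lie ring is right nilpotent: if x·y = y·x for all x,y and a_1·(a_2·(⋯(a_{m−1}·a_m)⋯)) = 0 for all a_i, then (⋯((b_1·b_2)·b_3)⋯)·b_m = 0 for all b_i. -/
/-- A commutative left nilpotent pre-Lie ring is right nilpotent: if x·y = y·x and
all right-bracketed products of length m vanish, then all left-bracketed products
of length m vanish. -/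
theorem stmt19 {A : Type*} [AddCommGroup A] (mul : A → A → A) (m : ℕ)
    (hadd_mul : ∀ x y z : A, mul (x + y) z = mul x z + mul y z)
    (hmul_add : ∀ x y z : A, mul x (y + z) = mul x y + mul x z)
    (hpre : ∀ x y z : A,
      mul (mul x y) z - mul x (mul y z) = mul (mul y x) z - mul y (mul x z))
    (hcomm : ∀ x y : A, mul x y = mul y x)
    (hleft : ∀ l : List A, l.length = m → rightProd mul l = 0) :
    ∀ l : List A, l.length = m → leftProd mul l = 0 := by
  -- commutativity + pre-Lie gives x(yz) = y(xz), hence associativity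
  have hsymm : ∀ x y z : A, mul x (mul y z) = mul y (mul x z) := by
    intro x y z
    have h := hpre x y z
    rw [hcomm x y] at h
    exact sub_right_injective h
  have hassoc : ∀ x y z : A, mul (mul x y) z = mul x (mul y z) := by
    intro x y z
    rw [hcomm (mul x y) z, hsymm z x y, hcomm z y]
  -- hence rightProd with a product head expands
  have key : ∀ (l : List A) (a b : A),
      rightProd mul (mul a b :: l) = mul a (rightProd mul (b :: l)) := by
    intro l
    induction l with
    | nil => intro a b; simp [rightProd]
    | cons c l ih =>
      intro a b
      show mul (mul a b) (rightProd mul (c :: l)) = mul a (rightProd mul (b :: c :: l))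
      rw [hassoc]
      rfl
  have eqprod : ∀ (l : List A) (a : A),
      List.foldl mul a l = rightProd mul (a :: l) := by
    intro l
    induction l with
    | nil => intro a; rfl
    | cons b l ih =>
      intro a
      show List.foldl mul (mul a b) l = _
      rw [ih (mul a b), key]
      rfl
  intro l hl
  rw [← hleft l hl]
  cases l with
  | nil => rfl
  | cons a l => exact eqprod l a
end
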